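/- arXiv:2207.14666 — 4 statements merged into one kernel-verified Lean document; each statement's English description precedes it below -/
import Mathlib

section
/- Let Λ > 0 and suppose school 1 is not exclusive. If p_1 > 1 − 1/Λ, then the true ROL (1,2,…,m) is strictly optimal: its utility is strictly greater than that of every ROL inducing a different vector of match probabilities. -/
/-!
Write `F t` for the probability of being matched to one of the schools `0, …, t`. Summing by
parts, the utility of a lottery is `v (last) + ∑ t (v t - v (t+1)) * ψ (F t)` with
`ψ x = x - Λ x (1 - x)`. Under the true ROL the applicant is matched among `0, …, t` exactly
when one of these schools is attainable, so its `F t` dominates that of any other ROL and is at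
least `p₁ > 1 - 1/Λ`. Since `ψ x - ψ y = (x - y)(1 - Λ + Λ (x + y))` and the second factor is
positive once `x > 1 - 1/Λ` and `y ≥ 0`, every term favours the true ROL, strictly at any `t`
where the cumulative distributions differ; they differ somewhere unless the lotteries coincide.
-/

open Finset

/-- An attainability distribution over states `A : Fin (m+2) → Bool`:
nonnegative, sums to one, and the outside option (school `m+2`, the last one)
is always attainable. -/
def IsAttDist {m : ℕ} (P : (Fin (m + 2) → Bool) → ℝ) : Prop :=
  (∀ A, 0 ≤ P A) ∧ (∑ A : Fin (m + 2) → Bool, P A = 1) ∧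
    ∀ A : Fin (m + 2) → Bool, A (Fin.last (m + 1)) = false → P A = 0

/-- Full support: every state in which the outside option is attainable has
strictly positive probability. -/
def FullSupport {m : ℕ} (P : (Fin (m + 2) → Bool) → ℝ) : Prop :=
  ∀ A : Fin (m + 2) → Bool, A (Fin.last (m + 1)) = true → 0 < P A

/-- Match probability of school `s` under ROL `ρ` (where `ρ k` is the school
ranked in position `k`): the probability that `s` is attainable and no school
ranked before `s` is attainable. -/
def matchProb {m : ℕ} (P : (Fin (m + 2) → Bool) → ℝ)
    (ρ : Equiv.Perm (Fin (m + 2))) (s : Fin (m + 2)) : ℝ :=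
  ∑ A : Fin (m + 2) → Bool,
    if A s = true ∧ ∀ ℓ, ℓ < ρ.symm s → A (ρ ℓ) = false then P A else 0

/-- Reference-dependent expected utility of a lottery `f` with loss dominance `Λ`. -/
def utility {m : ℕ} (Λ : ℝ) (v f : Fin (m + 2) → ℝ) : ℝ :=
  (∑ s, f s * v s) -
    Λ * ∑ s, ∑ r ∈ Finset.univ.filter (fun r => s < r), f s * f r * (v s - v r)

/-- An ROL is strictly optimal if its utility strictly exceeds that of every ROL
inducing a different vector of match probabilities. -/
def StrictlyOptimal {m : ℕ} (Λ : ℝ) (v : Fin (m + 2) → ℝ)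
    (P : (Fin (m + 2) → Bool) → ℝ) (ρ : Equiv.Perm (Fin (m + 2))) : Prop :=
  ∀ ρ' : Equiv.Perm (Fin (m + 2)), matchProb P ρ' ≠ matchProb P ρ →
    utility Λ v (matchProb P ρ') < utility Λ v (matchProb P ρ)

/-- An ROL is (weakly) optimal if its utility is weakly greater than that of
every other ROL. -/
def Optimal {m : ℕ} (Λ : ℝ) (v : Fin (m + 2) → ℝ)
    (P : (Fin (m + 2) → Bool) → ℝ) (ρ : Equiv.Perm (Fin (m + 2))) : Prop :=
  ∀ ρ' : Equiv.Perm (Fin (m + 2)),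
    utility Λ v (matchProb P ρ') ≤ utility Λ v (matchProb P ρ)

/-- Top-rank monotonicity of an ROL `ρ` (`ρ k` = school at rank `k`; lower
school label = more preferred). -/
def TopRankMonotone {m : ℕ} (ρ : Equiv.Perm (Fin (m + 2))) : Prop :=
  (∀ k i : Fin (m + 2), ρ k < ρ 0 → ρ i < ρ k → k < i) ∧
    ∀ l j : Fin (m + 2), ρ 0 < ρ l → ρ j < ρ l → j < l

section Matching

variable {ι : Type*} [LinearOrder ι] {ρ : Equiv.Perm ι} {A : ι → Bool} {s s' : ι}

def Matched (ρ : Equiv.Perm ι) (A : ι → Bool) (s : ι) : Prop :=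
  A s = true ∧ ∀ ℓ, ℓ < ρ.symm s → A (ρ ℓ) = false

instance [Fintype ι] (ρ : Equiv.Perm ι) (A : ι → Bool) (s : ι) :
    Decidable (Matched ρ A s) :=
  inferInstanceAs (Decidable (_ ∧ _))

theorem Matched.unique (h : Matched ρ A s) (h' : Matched ρ A s') : s = s' := by
  by_contra hne
  rcases lt_or_gt_of_ne (ρ.symm.injective.ne hne) with hlt | hlt
  · simpa [h.1] using h'.2 _ hlt
  · simpa [h'.1] using h.2 _ hlt

theorem exists_matched_iff [WellFoundedLT ι] : (∃ s, Matched ρ A s) ↔ ∃ s, A s = true := by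
  refine ⟨fun ⟨s, hs⟩ => ⟨s, hs.1⟩, fun ⟨s, hs⟩ => ?_⟩
  obtain ⟨k, hk, hmin⟩ :=
    wellFounded_lt.has_min {k | A (ρ k) = true} ⟨ρ.symm s, by simpa using hs⟩
  refine ⟨ρ k, hk, fun ℓ hℓ => ?_⟩
  rw [Equiv.symm_apply_apply] at hℓ
  exact Bool.eq_false_iff.2 fun hℓA => hmin ℓ hℓA hℓ

theorem Matched.le_of_refl (h : Matched (Equiv.refl ι) A s) (hs' : A s' = true) : s ≤ s' :=
  not_lt.1 fun hlt => by simpa [hs'] using h.2 s' hlt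

end Matching

theorem Finset.sum_ite_eq_ite_exists {α M : Type*} [AddCommMonoid M] (T : Finset α)
    (c : α → Prop) [DecidablePred c] [Decidable (∃ a ∈ T, c a)]
    (hc : ∀ a b, c a → c b → a = b) (x : M) :
    ∑ a ∈ T, (if c a then x else 0) = if ∃ a ∈ T, c a then x else 0 := by
  split_ifs with h
  · obtain ⟨a, ha, hca⟩ := h
    rw [sum_eq_single_of_mem a ha fun b _ hba => if_neg fun hcb => hba (hc b a hcb hca),
      if_pos hca]
  · exact sum_eq_zero fun a ha => if_neg fun hca => h ⟨a, ha, hca⟩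

section MatchProb

variable {m : ℕ} {P : (Fin (m + 2) → Bool) → ℝ}

def attainProb (P : (Fin (m + 2) → Bool) → ℝ) (T : Finset (Fin (m + 2))) : ℝ :=
  ∑ A, if ∃ s ∈ T, A s = true then P A else 0

theorem matchProb_eq_sum_matched (P : (Fin (m + 2) → Bool) → ℝ)
    (ρ : Equiv.Perm (Fin (m + 2))) (s : Fin (m + 2)) :
    matchProb P ρ s = ∑ A, if Matched ρ A s then P A else 0 :=
  sum_congr rfl fun _ _ => if_congr Iff.rfl rfl rfl

theorem sum_matchProb_eq (P : (Fin (m + 2) → Bool) → ℝ) (ρ : Equiv.Perm (Fin (m + 2)))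
    (T : Finset (Fin (m + 2))) :
    ∑ s ∈ T, matchProb P ρ s = ∑ A, if ∃ s ∈ T, Matched ρ A s then P A else 0 := by
  simp_rw [matchProb_eq_sum_matched]
  rw [sum_comm]
  exact sum_congr rfl fun A _ => sum_ite_eq_ite_exists _ _ (fun _ _ => Matched.unique) _

theorem matchProb_nonneg (hP : ∀ A, 0 ≤ P A) (ρ : Equiv.Perm (Fin (m + 2))) (s : Fin (m + 2)) :
    0 ≤ matchProb P ρ s :=
  sum_nonneg fun A _ => ite_nonneg (hP A) le_rfl

theorem sum_matchProb_le_attainProb (hP : ∀ A, 0 ≤ P A) (ρ : Equiv.Perm (Fin (m + 2)))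
    (T : Finset (Fin (m + 2))) : ∑ s ∈ T, matchProb P ρ s ≤ attainProb P T := by
  rw [sum_matchProb_eq]
  refine sum_le_sum fun A _ => ?_
  split_ifs with hmatch hattain hattain
  · exact le_rfl
  · obtain ⟨s, hs, h⟩ := hmatch
    exact absurd ⟨s, hs, h.1⟩ hattain
  · exact hP A
  · exact le_rfl

theorem sum_Iic_matchProb_refl (P : (Fin (m + 2) → Bool) → ℝ) (t : Fin (m + 2)) :
    ∑ s ∈ Iic t, matchProb P (Equiv.refl _) s = attainProb P (Iic t) := by
  rw [sum_matchProb_eq]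
  refine sum_congr rfl fun A _ => if_congr ⟨fun ⟨s, hs, h⟩ => ⟨s, hs, h.1⟩, ?_⟩ rfl rfl
  rintro ⟨s, hs, hA⟩
  obtain ⟨s', h'⟩ := exists_matched_iff.2 ⟨s, hA⟩
  exact ⟨s', mem_Iic.2 ((h'.le_of_refl hA).trans (mem_Iic.1 hs)), h'⟩

theorem sum_matchProb (hP : IsAttDist P) (ρ : Equiv.Perm (Fin (m + 2))) :
    ∑ s, matchProb P ρ s = 1 := by
  rw [sum_matchProb_eq, ← hP.2.1]
  refine sum_congr rfl fun A _ => ?_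
  cases hA : A (Fin.last (m + 1))
  · rw [hP.2.2 A hA, ite_self]
  · obtain ⟨s, hs⟩ := exists_matched_iff.2 ⟨_, hA⟩
    exact if_pos ⟨s, mem_univ s, hs⟩

theorem attainProb_mono (hP : ∀ A, 0 ≤ P A) {S T : Finset (Fin (m + 2))} (hST : S ⊆ T) :
    attainProb P S ≤ attainProb P T := by
  refine sum_le_sum fun A _ => ?_
  split_ifs with hS hT hT
  · exact le_rfl
  · obtain ⟨s, hs, h⟩ := hS
    exact absurd ⟨s, hST hs, h⟩ hT
  · exact hP A
  · exact le_rfl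

theorem attainProb_singleton (P : (Fin (m + 2) → Bool) → ℝ) (s : Fin (m + 2)) :
    attainProb P {s} = ∑ A, if A s = true then P A else 0 := by
  simp [attainProb]

end MatchProb

theorem Finset.eq_of_sum_Iic_eq {α M : Type*} [LinearOrder α] [LocallyFiniteOrderBot α]
    [WellFoundedLT α] [AddCancelCommMonoid M] {f g : α → M}
    (h : ∀ t, ∑ s ∈ Iic t, f s = ∑ s ∈ Iic t, g s) :
    f = g := by
  funext t
  induction t using WellFoundedLT.induction with
  | _ t ih =>
    have hIio : ∑ s ∈ Iio t, f s = ∑ s ∈ Iio t, g s :=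
      sum_congr rfl fun s hs => ih s (mem_Iio.1 hs)
    have := h t
    rw [← sum_Iio_add_eq_sum_Iic, ← sum_Iio_add_eq_sum_Iic, hIio] at this
    exact add_left_cancel this

theorem Fin.sum_mul_sub_by_parts {n : ℕ} (v a b : Fin (n + 1) → ℝ) (ha : a 0 = 0)
    (hab : ∀ t : Fin n, a t.succ = b t.castSucc) :
    ∑ s, v s * (b s - a s)
      = v (last n) * b (last n) + ∑ t : Fin n, (v t.castSucc - v t.succ) * b t.castSucc := by
  simp only [mul_sub, sub_mul, sum_sub_distrib]
  rw [Fin.sum_univ_castSucc (fun s => v s * b s), Fin.sum_univ_succ (fun s => v s * a s)]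
  simp only [ha, hab, mul_zero, zero_add]
  ring

def rankWeight (Λ x : ℝ) : ℝ := x - Λ * x * (1 - x)

theorem rankWeight_sub_rankWeight (Λ x y : ℝ) :
    rankWeight Λ x - rankWeight Λ y = (x - y) * (1 - Λ + Λ * (x + y)) := by
  unfold rankWeight
  ring

theorem one_sub_add_mul_add_pos {Λ x y : ℝ} (hΛ : 0 < Λ) (hx : 1 - 1 / Λ < x) (hy : 0 ≤ y) :
    0 < 1 - Λ + Λ * (x + y) := by
  nlinarith [mul_lt_mul_of_pos_left hx hΛ, mul_nonneg hΛ.le hy, mul_div_cancel₀ 1 hΛ.ne']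

theorem rankWeight_le_rankWeight {Λ x y : ℝ} (hΛ : 0 < Λ) (hx : 1 - 1 / Λ < x) (hy : 0 ≤ y)
    (hyx : y ≤ x) : rankWeight Λ y ≤ rankWeight Λ x := by
  rw [← sub_nonneg, rankWeight_sub_rankWeight]
  exact mul_nonneg (sub_nonneg.2 hyx) (one_sub_add_mul_add_pos hΛ hx hy).le

theorem rankWeight_lt_rankWeight {Λ x y : ℝ} (hΛ : 0 < Λ) (hx : 1 - 1 / Λ < x) (hy : 0 ≤ y)
    (hyx : y < x) : rankWeight Λ y < rankWeight Λ x := by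
  rw [← sub_pos, rankWeight_sub_rankWeight]
  exact mul_pos (sub_pos.2 hyx) (one_sub_add_mul_add_pos hΛ hx hy)

section Utility

variable {m : ℕ}

theorem sum_pairwise_eq (v f : Fin (m + 2) → ℝ) (hf : ∑ s, f s = 1) :
    ∑ s, ∑ r ∈ univ.filter (fun r => s < r), f s * f r * (v s - v r)
      = ∑ s, f s * v s * (1 - ∑ r ∈ Iic s, f r - ∑ r ∈ Iio s, f r) := by
  have hIoi : ∀ s, ∑ r ∈ Ioi s, f r = 1 - ∑ r ∈ Iic s, f r := fun s => by
    rw [eq_sub_iff_add_eq, ← hf, ← sum_union (disjoint_left.2 fun r h₁ h₂ =>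
      (mem_Ioi.1 h₁).not_ge (mem_Iic.1 h₂))]
    congr 1
    ext r
    simp [lt_or_ge]
  have hswap :
      ∑ s, ∑ r ∈ Ioi s, f s * f r * v r = ∑ r, f r * v r * ∑ s ∈ Iio r, f s := by
    calc ∑ s, ∑ r ∈ Ioi s, f s * f r * v r = ∑ r, ∑ s ∈ Iio r, f s * f r * v r :=
          sum_comm' fun s r => by simp
      _ = _ := by
          simp only [mul_sum]
          exact sum_congr rfl fun r _ => sum_congr rfl fun s _ => by ring
  calc ∑ s, ∑ r ∈ univ.filter (fun r => s < r), f s * f r * (v s - v r)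
      = ∑ s, f s * v s * ∑ r ∈ Ioi s, f r - ∑ s, ∑ r ∈ Ioi s, f s * f r * v r := by
        simp only [filter_lt_eq_Ioi (α := Fin (m + 2)), mul_sub, sum_sub_distrib, mul_sum]
        congr 1
        exact sum_congr rfl fun s _ => sum_congr rfl fun r _ => by ring
    _ = _ := by
        rw [hswap, ← sum_sub_distrib]
        exact sum_congr rfl fun s _ => by rw [hIoi]; ring

theorem utility_eq_sum_mul_rankWeight_sub (Λ : ℝ) (v f : Fin (m + 2) → ℝ)
    (hf : ∑ s, f s = 1) :
    utility Λ v f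
      = ∑ s, v s *
          (rankWeight Λ (∑ r ∈ Iic s, f r) - rankWeight Λ (∑ r ∈ Iio s, f r)) := by
  rw [utility, sum_pairwise_eq v f hf, mul_sum, ← sum_sub_distrib]
  refine sum_congr rfl fun s _ => ?_
  rw [rankWeight_sub_rankWeight, ← sum_Iio_add_eq_sum_Iic]
  ring

theorem utility_eq_last_add_sum (Λ : ℝ) (v f : Fin (m + 2) → ℝ) (hf : ∑ s, f s = 1) :
    utility Λ v f = v (Fin.last (m + 1))
      + ∑ t : Fin (m + 1),
          (v t.castSucc - v t.succ) * rankWeight Λ (∑ r ∈ Iic t.castSucc, f r) := by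
  rw [utility_eq_sum_mul_rankWeight_sub Λ v f hf, Fin.sum_mul_sub_by_parts]
  · rw [← Fin.top_eq_last, Iic_top, hf, rankWeight]
    ring
  · rw [← bot_eq_zero, Iio_bot, sum_empty, rankWeight]
    ring
  · intro t
    rw [show Iio t.succ = Iic t.castSucc by ext; simp [Fin.le_castSucc_iff]]

end Utility

theorem utility_lt_utility_of_sum_Iic_le {m : ℕ} {Λ : ℝ} (hΛ : 0 < Λ)
    {v f g : Fin (m + 2) → ℝ} (hv : StrictAnti v) (hf : ∑ s, f s = 1) (hg : ∑ s, g s = 1)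
    (hg₀ : ∀ s, 0 ≤ g s) (hgf : ∀ t, ∑ s ∈ Iic t, g s ≤ ∑ s ∈ Iic t, f s)
    (hf_large : ∀ t, 1 - 1 / Λ < ∑ s ∈ Iic t, f s) (hne : g ≠ f) :
    utility Λ v g < utility Λ v f := by
  obtain ⟨t₀, ht₀⟩ :
      ∃ t : Fin (m + 1), ∑ s ∈ Iic t.castSucc, g s < ∑ s ∈ Iic t.castSucc, f s := by
    by_contra! h
    refine hne (eq_of_sum_Iic_eq fun t => ?_)
    induction t using Fin.lastCases with
    | last => rw [← Fin.top_eq_last, Iic_top, hf, hg]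
    | cast t => exact le_antisymm (hgf _) (h t)
  have hgap : ∀ t : Fin (m + 1), 0 < v t.castSucc - v t.succ :=
    fun t => sub_pos.2 (hv t.castSucc_lt_succ)
  have hG₀ : ∀ t, 0 ≤ ∑ s ∈ Iic t, g s := fun t => sum_nonneg fun s _ => hg₀ s
  rw [utility_eq_last_add_sum Λ v g hg, utility_eq_last_add_sum Λ v f hf, add_lt_add_iff_left]
  refine sum_lt_sum (fun t _ => ?_) ⟨t₀, mem_univ _, ?_⟩
  · exact mul_le_mul_of_nonneg_left
      (rankWeight_le_rankWeight hΛ (hf_large _) (hG₀ _) (hgf _)) (hgap t).le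
  · exact mul_lt_mul_of_pos_left
      (rankWeight_lt_rankWeight hΛ (hf_large _) (hG₀ _) ht₀) (hgap t₀)

theorem stmt_4_general (m : ℕ) (Λ : ℝ) (hΛ : 0 < Λ) (v : Fin (m + 2) → ℝ)
    (hv : StrictAnti v) (P : (Fin (m + 2) → Bool) → ℝ) (hP : IsAttDist P)
    (hp1 : 1 - 1 / Λ < ∑ A : Fin (m + 2) → Bool, if A 0 = true then P A else 0) :
    StrictlyOptimal Λ v P (Equiv.refl (Fin (m + 2))) := by
  intro ρ hne
  refine utility_lt_utility_of_sum_Iic_le hΛ hv (sum_matchProb hP _) (sum_matchProb hP ρ)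
    (matchProb_nonneg hP.1 ρ) (fun t => ?_) (fun t => ?_) hne
  · rw [sum_Iic_matchProb_refl]
    exact sum_matchProb_le_attainProb hP.1 ρ _
  · rw [← attainProb_singleton] at hp1
    rw [sum_Iic_matchProb_refl]
    exact hp1.trans_le (attainProb_mono hP.1 (singleton_subset_iff.2 (mem_Iic.2 (Fin.zero_le t))))

/-- If `Λ > 0`, school 1 is not exclusive, and
`p₁ > 1 - 1/Λ`, then the true ROL (the identity) is strictly optimal. -/
theorem stmt_4 (m : ℕ) (Λ : ℝ) (hΛ : 0 < Λ) (v : Fin (m + 2) → ℝ)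
    (hv : StrictAnti v) (P : (Fin (m + 2) → Bool) → ℝ) (hP : IsAttDist P)
    (hnotexcl : 0 < P (fun _ => true))
    (hp1 : 1 - 1 / Λ < ∑ A : Fin (m + 2) → Bool, if A 0 = true then P A else 0) :
    StrictlyOptimal Λ v P (Equiv.refl (Fin (m + 2))) :=
  stmt_4_general m Λ hΛ v hv P hP hp1
end

section
/- Adjacent-swap criterion: let Λ > 0 and consider two ROLs that agree except that two adjacently ranked schools x < y are swapped, the first being (…, x, y, …) and the second (…, y, x, …). Let F = (f_s) and F' = (f'_s) be their induced lotteries, and let ε be the probability that schools x and y are both attainable but no school ranked before them is attainable, so that f'_s = f_s for s ∉ {x,y}, f'_x = f_x − ε, and f'_y = f_y + ε. Then U(F) ≥ U(F') if and only if ε/Λ ≥ ε·( −Σ_{s=1}^{x} f_s + ε + Σ_{s=x+1}^{y−1} f_s·(v_x + v_y − 2v_s)/(v_x − v_y) + Σ_{s=y}^{m} f_s ), and U(F) = U(F') exactly when this inequality holds with equality. -/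
open Finset

private def dIte {n : ℕ} (a : Fin n) : Fin n → ℝ := fun s => if s = a then 1 else 0

private def Bform {n : ℕ} (v f g : Fin n → ℝ) : ℝ :=
  ∑ s, ∑ r ∈ Finset.univ.filter (fun r => s < r), f s * g r * (v s - v r)

private lemma B_combo_left {n : ℕ} (v g f : Fin n → ℝ) (a b : Fin n) (c d : ℝ) :
    Bform v (fun s => f s + (c * dIte a s + d * dIte b s)) g
      = Bform v f g + c * Bform v (dIte a) g + d * Bform v (dIte b) g := by
  simp only [Bform, Finset.mul_sum, ← Finset.sum_add_distrib]
  exact Finset.sum_congr rfl fun s _ => Finset.sum_congr rfl fun r _ => by ring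

private lemma B_combo_right {n : ℕ} (v f g : Fin n → ℝ) (a b : Fin n) (c d : ℝ) :
    Bform v f (fun r => g r + (c * dIte a r + d * dIte b r))
      = Bform v f g + c * Bform v f (dIte a) + d * Bform v f (dIte b) := by
  simp only [Bform, Finset.mul_sum, ← Finset.sum_add_distrib]
  exact Finset.sum_congr rfl fun s _ => Finset.sum_congr rfl fun r _ => by ring

private lemma B_delta_left {n : ℕ} (v g : Fin n → ℝ) (a : Fin n) :
    Bform v (dIte a) g = ∑ r ∈ Finset.univ.filter (fun r => a < r), g r * (v a - v r) := by
  rw [Bform, Finset.sum_eq_single_of_mem a (Finset.mem_univ a)]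
  · exact Finset.sum_congr rfl fun r _ => by simp [dIte]
  · intro s _ hs
    exact Finset.sum_eq_zero fun r _ => by simp [dIte, hs]

private lemma B_delta_right {n : ℕ} (v f : Fin n → ℝ) (a : Fin n) :
    Bform v f (dIte a) = ∑ s, if s < a then f s * (v s - v a) else 0 := by
  unfold Bform
  refine Finset.sum_congr rfl fun s _ => ?_
  simp only [dIte, mul_ite, mul_one, mul_zero, ite_mul, zero_mul]
  rw [Finset.sum_ite_eq' (Finset.univ.filter (fun r => s < r)) a (fun r => f s * (v s - v r))]
  simp

private lemma B_delta_delta {n : ℕ} (v : Fin n → ℝ) (a b : Fin n) :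
    Bform v (dIte a) (dIte b) = if a < b then v a - v b else 0 := by
  rw [B_delta_left]
  simp only [dIte, ite_mul, one_mul, zero_mul]
  rw [Finset.sum_ite_eq' (Finset.univ.filter (fun r => a < r)) b (fun r => v a - v r)]
  simp

private lemma forall_lt_swap {n : ℕ} (p q k : Fin n)
    (hmono : ∀ ℓ, ℓ < k → Equiv.swap p q ℓ < k) (Q : Fin n → Prop) :
    (∀ ℓ, ℓ < k → Q (Equiv.swap p q ℓ)) ↔ (∀ ℓ, ℓ < k → Q ℓ) := by
  constructor
  · intro h ℓ hℓ
    have := h _ (hmono ℓ hℓ)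
    rwa [Equiv.swap_apply_self] at this
  · intro h ℓ hℓ
    exact h _ (hmono ℓ hℓ)
/-- the adjacent-swap criterion.  Two ROLs agree except that the
schools `x < y` occupying two adjacent positions `p, p+1` are swapped.  With
`ε` the probability that `x` and `y` are both attainable and no school ranked
before them is, the induced lotteries differ only by a shift of mass `ε` from
`x` to `y`, and `U(F) ≥ U(F')` iff the stated inequality holds, with equality
of utilities exactly at equality. -/
theorem stmt_7 (m : ℕ) (Λ : ℝ) (hΛ : 0 < Λ) (v : Fin (m + 2) → ℝ)
    (hv : StrictAnti v) (P : (Fin (m + 2) → Bool) → ℝ) (hP : IsAttDist P)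
    (ρ : Equiv.Perm (Fin (m + 2))) (p : Fin (m + 2)) (hp : (p : ℕ) + 1 < m + 2)
    (x y : Fin (m + 2)) (hx : x = ρ p) (hy : y = ρ ⟨(p : ℕ) + 1, hp⟩)
    (hxy : x < y) :
    let ρ' : Equiv.Perm (Fin (m + 2)) := ρ * Equiv.swap p ⟨(p : ℕ) + 1, hp⟩
    let F : Fin (m + 2) → ℝ := matchProb P ρ
    let F' : Fin (m + 2) → ℝ := matchProb P ρ'
    let ε : ℝ := ∑ A : Fin (m + 2) → Bool,
      if A x = true ∧ A y = true ∧ ∀ ℓ, ℓ < p → A (ρ ℓ) = false then P A else 0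
    let rhs : ℝ := ε * (-(∑ s ∈ Finset.univ.filter (fun s => s ≤ x), F s) + ε +
      (∑ s ∈ Finset.univ.filter (fun s => x < s ∧ s < y),
        F s * ((v x + v y - 2 * v s) / (v x - v y))) +
      ∑ s ∈ Finset.univ.filter (fun s => y ≤ s), F s)
    (∀ s, s ≠ x → s ≠ y → F' s = F s) ∧
      F' x = F x - ε ∧ F' y = F y + ε ∧
      (utility Λ v F' ≤ utility Λ v F ↔ rhs ≤ ε / Λ) ∧
      (utility Λ v F = utility Λ v F' ↔ ε / Λ = rhs) := by
  intro ρ' F F' ε rhs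
  set q1 : Fin (m + 2) := ⟨(p : ℕ) + 1, hp⟩ with hq1def
  have hq1 : p < q1 := by simp [Fin.lt_def, hq1def]
  have hρ'app : ∀ ℓ, ρ' ℓ = ρ (Equiv.swap p q1 ℓ) := fun ℓ => rfl
  -- part 1
  have part1 : ∀ s, s ≠ x → s ≠ y → F' s = F s := by
    intro s hsx hsy
    have hk1 : ρ.symm s ≠ p := fun h => hsx (by rw [hx, ← h, Equiv.apply_symm_apply])
    have hk2 : ρ.symm s ≠ q1 := fun h => hsy (by rw [hy, ← h, Equiv.apply_symm_apply])
    have hsymm : ρ'.symm s = ρ.symm s := by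
      rw [Equiv.symm_apply_eq, hρ'app, Equiv.swap_apply_of_ne_of_ne hk1 hk2,
        Equiv.apply_symm_apply]
    have hmono : ∀ ℓ, ℓ < ρ.symm s → Equiv.swap p q1 ℓ < ρ.symm s := by
      intro ℓ hℓ
      rcases eq_or_ne ℓ p with h1 | h1
      · rw [h1, Equiv.swap_apply_left]
        have hvq1 : (q1 : ℕ) = (p : ℕ) + 1 := rfl
        have h2 : (ρ.symm s : ℕ) ≠ (p : ℕ) + 1 := fun h =>
          hk2 (Fin.ext (h.trans hvq1.symm))
        have h3 : p < ρ.symm s := h1 ▸ hℓ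
        rw [Fin.lt_def] at h3 ⊢
        rw [hvq1]
        omega
      · rcases eq_or_ne ℓ q1 with h2 | h2
        · rw [h2, Equiv.swap_apply_right]; exact lt_trans hq1 (h2 ▸ hℓ)
        · rw [Equiv.swap_apply_of_ne_of_ne h1 h2]; exact hℓ
    show matchProb P ρ' s = matchProb P ρ s
    unfold matchProb
    refine Finset.sum_congr rfl fun A _ => ?_
    refine if_congr (and_congr_right fun _ => ?_) rfl rfl
    rw [hsymm]
    simp only [hρ'app]
    exact forall_lt_swap p q1 (ρ.symm s) hmono (fun ℓ => A (ρ ℓ) = false)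
  -- part 2x
  have hsymx : ρ.symm x = p := by rw [hx, Equiv.symm_apply_apply]
  have hsymy : ρ.symm y = q1 := by rw [hy, Equiv.symm_apply_apply]
  have hsymm'x : ρ'.symm x = q1 := by
    rw [Equiv.symm_apply_eq, hρ'app, Equiv.swap_apply_right]; exact hx
  have hsymm'y : ρ'.symm y = p := by
    rw [Equiv.symm_apply_eq, hρ'app, Equiv.swap_apply_left]; exact hy
  have hlt_q1 : ∀ ℓ : Fin (m + 2), ℓ < q1 ↔ (ℓ = p ∨ ℓ < p) := by
    intro ℓ
    have hvq1 : (q1 : ℕ) = (p : ℕ) + 1 := rfl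
    rw [Fin.lt_def, Fin.lt_def, Fin.ext_iff, hvq1]
    omega
  have part2x : F' x = F x - ε := by
    show matchProb P ρ' x = matchProb P ρ x - ε
    unfold matchProb
    rw [← Finset.sum_sub_distrib]
    refine Finset.sum_congr rfl fun A _ => ?_
    rw [hsymx, hsymm'x]
    have hcond : (∀ ℓ, ℓ < q1 → A (ρ' ℓ) = false) ↔
        (A y = false ∧ ∀ ℓ, ℓ < p → A (ρ ℓ) = false) := by
      constructor
      · intro h
        refine ⟨?_, fun ℓ hℓ => ?_⟩
        · have := h p hq1
          rwa [hρ'app, Equiv.swap_apply_left, ← hy] at this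
        · have := h ℓ ((hlt_q1 ℓ).2 (Or.inr hℓ))
          rwa [hρ'app, Equiv.swap_apply_of_ne_of_ne (ne_of_lt hℓ)
            (ne_of_lt (lt_trans hℓ hq1))] at this
      · rintro ⟨hAy, h⟩ ℓ hℓ
        rcases (hlt_q1 ℓ).1 hℓ with rfl | hℓp
        · rw [hρ'app, Equiv.swap_apply_left, ← hy]; exact hAy
        · rw [hρ'app, Equiv.swap_apply_of_ne_of_ne (ne_of_lt hℓp)
            (ne_of_lt (lt_trans hℓp hq1))]
          exact h ℓ hℓp
    rw [if_congr (and_congr_right fun _ => hcond) rfl rfl]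
    by_cases hAx : A x = true
    · by_cases hall : ∀ ℓ, ℓ < p → A (ρ ℓ) = false
      · cases hAy : A y <;> simp [hAx, hall, hAy]
      · simp [hAx, hall]
    · simp [hAx]
  have part2y : F' y = F y + ε := by
    show matchProb P ρ' y = matchProb P ρ y + ε
    unfold matchProb
    rw [← Finset.sum_add_distrib]
    refine Finset.sum_congr rfl fun A _ => ?_
    rw [hsymy, hsymm'y]
    have hcond : (∀ ℓ, ℓ < p → A (ρ' ℓ) = false) ↔ (∀ ℓ, ℓ < p → A (ρ ℓ) = false) := by
      constructor
      · intro h ℓ hℓ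
        have := h ℓ hℓ
        rwa [hρ'app, Equiv.swap_apply_of_ne_of_ne (ne_of_lt hℓ)
          (ne_of_lt (lt_trans hℓ hq1))] at this
      · intro h ℓ hℓ
        rw [hρ'app, Equiv.swap_apply_of_ne_of_ne (ne_of_lt hℓ)
          (ne_of_lt (lt_trans hℓ hq1))]
        exact h ℓ hℓ
    have hcond2 : (∀ ℓ, ℓ < q1 → A (ρ ℓ) = false) ↔
        (A x = false ∧ ∀ ℓ, ℓ < p → A (ρ ℓ) = false) := by
      constructor
      · intro h
        refine ⟨?_, fun ℓ hℓ => h ℓ ((hlt_q1 ℓ).2 (Or.inr hℓ))⟩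
        have := h p hq1
        rwa [← hx] at this
      · rintro ⟨hAx, h⟩ ℓ hℓ
        rcases (hlt_q1 ℓ).1 hℓ with rfl | hℓp
        · rwa [← hx]
        · exact h ℓ hℓp
    rw [if_congr (and_congr_right fun _ => hcond) rfl rfl,
      if_congr (and_congr_right fun _ => hcond2) rfl rfl]
    by_cases hAy : A y = true
    · by_cases hall : ∀ ℓ, ℓ < p → A (ρ ℓ) = false
      · cases hAx : A x <;> simp [hAx, hall, hAy]
      · simp [hAy, hall]
    · simp [hAy]
  -- utility comparison
  have hvxy : 0 < v x - v y := sub_pos.2 (hv hxy)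
  have hne : v x - v y ≠ 0 := ne_of_gt hvxy
  have hxny : x ≠ y := ne_of_lt hxy
  have hF'fun : F' = fun s => F s + (ε * dIte y s + (-ε) * dIte x s) := by
    funext s
    by_cases h1 : s = x
    · rw [h1, part2x]; simp [dIte, hxny]; try ring
    · by_cases h2 : s = y
      · rw [h2, part2y]; simp [dIte, hxny.symm]; try ring
      · rw [part1 s h1 h2]; simp [dIte, h1, h2]
  have hlin : ∑ s, F' s * v s = (∑ s, F s * v s) + (ε * v y + (-ε) * v x) := by
    rw [hF'fun]
    simp only [add_mul, Finset.sum_add_distrib]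
    congr 1
    simp [dIte, ite_mul, zero_mul, mul_ite, mul_zero, mul_one, mul_assoc]
  have hquad : Bform v F' F' = Bform v F F
      + ε * ((∑ s, if s < y then F s * (v s - v y) else 0)
        - (∑ s, if s < x then F s * (v s - v x) else 0))
      + ε * ((∑ r ∈ Finset.univ.filter (fun r => y < r), F r * (v y - v r))
        - (∑ r ∈ Finset.univ.filter (fun r => x < r), F r * (v x - v r)))
      - ε ^ 2 * (v x - v y) := by
    rw [hF'fun, B_combo_left, B_combo_right, B_combo_right, B_combo_right,
      B_delta_delta, B_delta_delta, B_delta_delta, B_delta_delta,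
      B_delta_left, B_delta_left, B_delta_right, B_delta_right]
    rw [if_neg (lt_irrefl y), if_neg (asymm hxy), if_pos hxy, if_neg (lt_irrefl x)]
    ring
  have hpt : ∀ s : Fin (m + 2),
      ((if s < y then F s * (v s - v y) else 0) - (if s < x then F s * (v s - v x) else 0))
      + ((if y < s then F s * (v y - v s) else 0) - (if x < s then F s * (v x - v s) else 0))
      = (v x - v y) * (if s ≤ x then F s else 0)
        - (if x < s ∧ s < y then F s * (v x + v y - 2 * v s) else 0)
        - (v x - v y) * (if y ≤ s then F s else 0) := by
    intro s
    rcases lt_trichotomy s x with h | h | h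
    · have h2 : s < y := lt_trans h hxy
      simp only [if_pos h2, if_pos h, if_pos (le_of_lt h), if_neg (asymm h2), if_neg (asymm h),
        if_neg (not_le.2 h2), if_neg (fun hc : x < s ∧ s < y => (asymm h) hc.1)]
      ring
    · subst h
      simp only [if_pos hxy, if_neg (lt_irrefl s), if_pos (le_refl s), if_neg (asymm hxy),
        if_neg (not_le.2 hxy), if_neg (fun hc : s < s ∧ s < y => (lt_irrefl s) hc.1)]
      ring
    · rcases lt_trichotomy s y with h' | h' | h'
      · simp only [if_pos h', if_neg (asymm h), if_neg (asymm h'), if_pos h,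
          if_neg (not_le.2 h), if_neg (not_le.2 h'), if_pos (And.intro h h')]
        ring
      · subst h'
        simp only [if_neg (lt_irrefl s), if_neg (asymm h), if_pos h, if_neg (not_le.2 h),
          if_pos (le_refl s), if_neg (fun hc : x < s ∧ s < s => (lt_irrefl s) hc.2)]
        ring
      · have h2 : ¬ s < x := asymm h
        simp only [if_neg (asymm h'), if_neg h2, if_pos h', if_pos h,
          if_neg (not_le.2 h), if_pos (le_of_lt h'),
          if_neg (fun hc : x < s ∧ s < y => (asymm h') hc.2)]
        ring
  have hsum : (∑ s, if s < y then F s * (v s - v y) else 0)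
        - (∑ s, if s < x then F s * (v s - v x) else 0)
      + ((∑ r ∈ Finset.univ.filter (fun r => y < r), F r * (v y - v r))
        - (∑ r ∈ Finset.univ.filter (fun r => x < r), F r * (v x - v r)))
      = (v x - v y) * (∑ s ∈ Finset.univ.filter (fun s => s ≤ x), F s)
        - (∑ s, if x < s ∧ s < y then F s * (v x + v y - 2 * v s) else 0)
        - (v x - v y) * (∑ s ∈ Finset.univ.filter (fun s => y ≤ s), F s) := by
    have h := Finset.sum_congr rfl (fun s (_ : s ∈ (Finset.univ : Finset (Fin (m + 2)))) => hpt s)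
    simp only [Finset.sum_add_distrib, Finset.sum_sub_distrib, ← Finset.mul_sum] at h
    rw [Finset.sum_filter, Finset.sum_filter, Finset.sum_filter, Finset.sum_filter]
    exact h
  have hT2 : (v x - v y) * (∑ s ∈ Finset.univ.filter (fun s => x < s ∧ s < y),
        F s * ((v x + v y - 2 * v s) / (v x - v y)))
      = ∑ s, if x < s ∧ s < y then F s * (v x + v y - 2 * v s) else 0 := by
    rw [Finset.sum_filter, Finset.mul_sum]
    refine Finset.sum_congr rfl fun s _ => ?_
    split_ifs with h
    · field_simp
    · simp
  have hrhs : rhs = ε * (-(∑ s ∈ Finset.univ.filter (fun s => s ≤ x), F s) + ε +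
      (∑ s ∈ Finset.univ.filter (fun s => x < s ∧ s < y),
        F s * ((v x + v y - 2 * v s) / (v x - v y))) +
      ∑ s ∈ Finset.univ.filter (fun s => y ≤ s), F s) := rfl
  have hdiv : Λ * (ε / Λ) = ε := by field_simp
  have key : utility Λ v F - utility Λ v F' = Λ * (v x - v y) * (ε / Λ - rhs) := by
    have hUF : utility Λ v F = (∑ s, F s * v s) - Λ * Bform v F F := rfl
    have hUF' : utility Λ v F' = (∑ s, F' s * v s) - Λ * Bform v F' F' := rfl
    rw [hUF, hUF', hlin, hquad, hrhs]
    linear_combination Λ * ε * hsum + Λ * ε * hT2 - (v x - v y) * hdiv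
  have hpos : 0 < Λ * (v x - v y) := mul_pos hΛ hvxy
  refine ⟨part1, part2x, part2y, ?_, ?_⟩
  · constructor
    · intro h
      have h0 : 0 ≤ Λ * (v x - v y) * (ε / Λ - rhs) := key ▸ sub_nonneg.2 h
      have h1 : 0 ≤ ε / Λ - rhs := nonneg_of_mul_nonneg_right h0 hpos
      linarith
    · intro h
      have h1 : 0 ≤ Λ * (v x - v y) * (ε / Λ - rhs) :=
        mul_nonneg (le_of_lt hpos) (by linarith)
      linarith [key]
  · constructor
    · intro h
      have h0 : Λ * (v x - v y) * (ε / Λ - rhs) = 0 := by rw [← key, h, sub_self]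
      rcases mul_eq_zero.1 h0 with h1 | h1
      · exact absurd h1 (ne_of_gt hpos)
      · linarith [sub_eq_zero.1 h1]
    · intro h
      have h1 : ε / Λ - rhs = 0 := by rw [h, sub_self]
      have := key
      rw [h1, mul_zero] at this
      linarith
end

section
/- In the elite-school problem, for any belief about attainability of the elite schools, the best response lists either all elite schools or no elite school before the district school: for every subset T of the set E of elite schools, f_T·v − Λ·f_T·(1 − f_T)·v ≤ max( 0 , f_E·v − Λ·f_E·(1 − f_E)·v ), where f_T = P(A_s = 1 for some s ∈ T). In particular, the maximum over subsets T ⊆ E of f_T·v − Λ·f_T·(1 − f_T)·v is attained at T = ∅ or at T = E. -/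
/-- Convexity key lemma: for `0 ≤ x ≤ M ≤ 1`, the quadratic utility at `x`
is at most `max 0` of the utility at `M`. -/
lemma key_quad (v Λ x M : ℝ) (hv : 0 < v) (hΛ : 0 ≤ Λ)
    (hx0 : 0 ≤ x) (hxM : x ≤ M) (hM1 : M ≤ 1) :
    x * v - Λ * (x * ((1 - x) * v)) ≤
      max 0 (M * v - Λ * (M * ((1 - M) * v))) := by
  have hM0 : 0 ≤ M := le_trans hx0 hxM
  have hconv : M * (x * v - Λ * (x * ((1 - x) * v)))
      ≤ x * (M * v - Λ * (M * ((1 - M) * v))) := by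
    nlinarith [mul_nonneg (mul_nonneg hv.le hΛ) (mul_nonneg (mul_nonneg hx0 hM0) (sub_nonneg.2 hxM))]
  rcases le_or_gt (M * v - Λ * (M * ((1 - M) * v))) 0 with h | h
  · refine le_trans ?_ (le_max_left _ _)
    rcases eq_or_lt_of_le hM0 with hM | hM
    · have : x = 0 := le_antisymm (hxM.trans hM.symm.le) hx0
      simp [this]
    · nlinarith
  · refine le_trans ?_ (le_max_right _ _)
    rcases eq_or_lt_of_le hM0 with hM | hM
    · have : x = 0 := le_antisymm (hxM.trans hM.symm.le) hx0
      simp only [this]; nlinarith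
    · nlinarith

/-- in the elite-school problem, for any belief about
attainability of the elite schools `E`, the best response lists either all
elite schools or none before the district school.  For `T ⊆ E`,
`f T` is the probability that at least one school in `T` is attainable, and
listing exactly `T` yields expected utility `f T · v − Λ · f T · (1 − f T) · v`.
Every subset's utility is at most `max 0 (utility of E)`, and the maximum over
subsets is attained at `∅` or at `E`. -/
theorem stmt_10 (E : Type) [Fintype E] [DecidableEq E]
    (P : (E → Bool) → ℝ) (hP0 : ∀ A, 0 ≤ P A) (hP1 : ∑ A : E → Bool, P A = 1)
    (v Λ : ℝ) (hv : 0 < v) (hΛ : 0 ≤ Λ)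
    (f : Finset E → ℝ)
    (hf : ∀ T : Finset E,
      f T = ∑ A : E → Bool, if ∃ s ∈ T, A s = true then P A else 0) :
    (∀ T : Finset E, f T * v - Λ * (f T * ((1 - f T) * v)) ≤
        max 0 (f Finset.univ * v -
          Λ * (f Finset.univ * ((1 - f Finset.univ) * v)))) ∧
      ∃ T : Finset E, (T = ∅ ∨ T = Finset.univ) ∧
        ∀ T' : Finset E, f T' * v - Λ * (f T' * ((1 - f T') * v)) ≤
          f T * v - Λ * (f T * ((1 - f T) * v)) := by
  have hf0 : ∀ T : Finset E, 0 ≤ f T := by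
    intro T
    rw [hf]
    refine Finset.sum_nonneg fun A _ => ?_
    split <;> simp [hP0 A]
  have hmono : ∀ T : Finset E, f T ≤ f Finset.univ := by
    intro T
    rw [hf, hf]
    refine Finset.sum_le_sum fun A _ => ?_
    by_cases h : ∃ s ∈ T, A s = true
    · rw [if_pos h, if_pos (h.imp fun s hs => ⟨Finset.mem_univ s, hs.2⟩)]
    · rw [if_neg h]
      split <;> simp [hP0 A]
  have hle1 : f Finset.univ ≤ 1 := by
    rw [hf, ← hP1]
    refine Finset.sum_le_sum fun A _ => ?_
    split <;> simp [hP0 A]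
  have hfe : f ∅ = 0 := by
    rw [hf]; simp
  have hmax : ∀ T : Finset E, f T * v - Λ * (f T * ((1 - f T) * v)) ≤
      max 0 (f Finset.univ * v -
        Λ * (f Finset.univ * ((1 - f Finset.univ) * v))) :=
    fun T => key_quad v Λ (f T) (f Finset.univ) hv hΛ (hf0 T) (hmono T) hle1
  refine ⟨hmax, ?_⟩
  rcases le_or_gt 0 (f Finset.univ * v -
      Λ * (f Finset.univ * ((1 - f Finset.univ) * v))) with h | h
  · exact ⟨Finset.univ, Or.inr rfl, fun T' => (hmax T').trans_eq (max_eq_right h)⟩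
  · refine ⟨∅, Or.inl rfl, fun T' => ?_⟩
    have := (hmax T').trans_eq (max_eq_left h.le)
    simpa [hfe] using this
end

section
/- For any attainability distribution P, the lottery induced by the true ROL (1,2,…,m) first-order stochastically dominates the lottery induced by any other ROL: if F = (f_s) is induced by the true ROL and F' = (f'_s) is induced by an arbitrary ROL, then Σ_{s=1}^{k} f_s ≥ Σ_{s=1}^{k} f'_s for every k = 1,…,m. -/
open Finset

/-- At most one school can be the first-attainable school under a given ROL. -/
lemma first_attain_unique {n : ℕ} (ρ : Equiv.Perm (Fin n)) (A : Fin n → Bool)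
    {s t : Fin n}
    (hs : A s = true ∧ ∀ ℓ, ℓ < ρ.symm s → A (ρ ℓ) = false)
    (ht : A t = true ∧ ∀ ℓ, ℓ < ρ.symm t → A (ρ ℓ) = false) : s = t := by
  rcases lt_trichotomy (ρ.symm s) (ρ.symm t) with h | h | h
  · have := ht.2 _ h
    rw [Equiv.apply_symm_apply] at this
    rw [hs.1] at this; exact absurd this (by simp)
  · exact ρ.symm.injective h
  · have := hs.2 _ h
    rw [Equiv.apply_symm_apply] at this
    rw [ht.1] at this; exact absurd this (by simp)

lemma sum_ite_first {n : ℕ} (ρ : Equiv.Perm (Fin n)) (A : Fin n → Bool)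
    (S : Finset (Fin n)) (c : ℝ) {s₀ : Fin n} (hmem : s₀ ∈ S)
    (h₀ : A s₀ = true ∧ ∀ ℓ, ℓ < ρ.symm s₀ → A (ρ ℓ) = false) :
    ∑ s ∈ S, (if A s = true ∧ ∀ ℓ, ℓ < ρ.symm s → A (ρ ℓ) = false then c else 0)
      = c := by
  rw [Finset.sum_eq_single_of_mem s₀ hmem]
  · rw [if_pos h₀]
  · intro t _ hts
    rw [if_neg]
    intro ht
    exact hts (first_attain_unique ρ A ht h₀)

/-- the lottery induced by the true ROL (the identity) first-order
stochastically dominates the lottery induced by any other ROL. -/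
theorem stmt_13 (m : ℕ) (P : (Fin (m + 2) → Bool) → ℝ) (hP : IsAttDist P)
    (ρ' : Equiv.Perm (Fin (m + 2))) (k : Fin (m + 2)) :
    ∑ s ∈ Finset.univ.filter (fun s => s ≤ k), matchProb P ρ' s ≤
      ∑ s ∈ Finset.univ.filter (fun s => s ≤ k),
        matchProb P (Equiv.refl (Fin (m + 2))) s := by
  obtain ⟨hpos, -, -⟩ := hP
  unfold matchProb
  rw [Finset.sum_comm, Finset.sum_comm (t := Finset.univ)]
  refine Finset.sum_le_sum fun A _ => ?_
  set S := Finset.univ.filter (fun s : Fin (m + 2) => s ≤ k) with hS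
  by_cases h : ∃ s ∈ S, A s = true ∧ ∀ ℓ, ℓ < ρ'.symm s → A (ρ' ℓ) = false
  · obtain ⟨s₀, hs₀S, hc⟩ := h
    rw [sum_ite_first ρ' A S (P A) hs₀S hc]
    -- find the least attainable school
    have hAne : (Finset.univ.filter (fun s : Fin (m + 2) => A s = true)).Nonempty :=
      ⟨s₀, by simp [hc.1]⟩
    set T := Finset.univ.filter (fun s : Fin (m + 2) => A s = true) with hT
    set t₀ := T.min' hAne with ht₀
    have ht₀T : t₀ ∈ T := T.min'_mem hAne
    have ht₀A : A t₀ = true := by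
      have := ht₀T; rw [hT, Finset.mem_filter] at this; exact this.2
    have ht₀le : t₀ ≤ s₀ := T.min'_le s₀ (by simp [hT, hc.1])
    have hs₀k : s₀ ≤ k := by
      have := hs₀S; rw [hS, Finset.mem_filter] at this; exact this.2
    have ht₀S : t₀ ∈ S := by simp [hS, le_trans ht₀le hs₀k]
    have hcid : A t₀ = true ∧
        ∀ ℓ, ℓ < (Equiv.refl (Fin (m + 2))).symm t₀ →
          A ((Equiv.refl (Fin (m + 2))) ℓ) = false := by
      refine ⟨ht₀A, fun ℓ hℓ => ?_⟩
      simp only [Equiv.refl_symm, Equiv.refl_apply] at hℓ ⊢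
      by_contra hfa
      have hℓT : ℓ ∈ T := by
        simp only [hT, Finset.mem_filter, Finset.mem_univ, true_and]
        exact Bool.not_eq_false _ |>.mp hfa
      exact absurd (T.min'_le ℓ hℓT) (not_le.mpr hℓ)
    rw [sum_ite_first (Equiv.refl (Fin (m + 2))) A S (P A) ht₀S hcid]
  · have hz : ∑ s ∈ S,
        (if A s = true ∧ ∀ ℓ, ℓ < ρ'.symm s → A (ρ' ℓ) = false then P A else 0)
          = 0 := by
      refine Finset.sum_eq_zero fun s hs => ?_
      rw [if_neg]; exact fun hc => h ⟨s, hs, hc⟩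
    rw [hz]
    refine Finset.sum_nonneg fun s _ => ?_
    split <;> [exact hpos A; rfl]
end
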